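/- Let t_0 be an index such that P_i(T_i > θ^{(t_0)}) < 1/2. Then for every t ≥ t_0, with probability at least 1 − α the following hold simultaneously: (1 − p̂^{(k)}) ∈ [(1−ε)(1 − P_i(T_i > θ^{(k)})), (1+ε)(1 − P_i(T_i > θ^{(k)}))] for all k = t_0, …, t, and T̂_i^{(k)} ∈ [(1−ε)·E_i[min(T_i, θ^{(k)})], (1+ε)·E_i[min(T_i, θ^{(k)})]] for all k = 1, …, t. -/

import Mathlib

open MeasureTheory ProbabilityTheory Finset Set
open scoped ENNReal NNReal Classical

namespace LocalStationary

noncomputable section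

/-- First return time (≥ 1) of a trajectory `f` to the state `i`, valued in `ℕ∞`
(it equals `⊤` if the trajectory never returns to `i`). -/
def hit {S : Type*} (i : S) (f : ℕ → S) : ℕ∞ :=
  sInf {n : ℕ∞ | ∃ m : ℕ, n = m ∧ 1 ≤ m ∧ f m = i}

/-- Truncated return time `min(T_i, θ)` as a natural number. -/
def truncHit {S : Type*} (i : S) (θ : ℕ) (f : ℕ → S) : ℕ :=
  (min (hit i f) (θ : ℕ∞)).toNat

/-- Number of visits to `j` among the first `min(T_i, θ)` steps of the trajectory. -/
def visits {S : Type*} (i j : S) (θ : ℕ) (f : ℕ → S) : ℕ :=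
  ((Finset.Icc 1 (truncHit i θ f)).filter fun s => f s = j).card

/-- A discrete-time time-homogeneous Markov chain on a state space `S`, described by
the laws `μ x` of its trajectories started at each state `x`, together with its
transition matrix `trans`. -/
structure Chain (S : Type*) [MeasurableSpace S] where
  μ : S → Measure (ℕ → S)
  isProb : ∀ x, IsProbabilityMeasure (μ x)
  start : ∀ x, μ x {f | f 0 = x} = 1
  trans : S → S → ℝ≥0∞
  trans_sum : ∀ x, ∑' y, trans x y = 1
  markov : ∀ x (n : ℕ) (s : ℕ → S),
    μ x {f | ∀ k ≤ n + 1, f k = s k} =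
      μ x {f | ∀ k ≤ n, f k = s k} * trans (s n) (s (n + 1))

namespace Chain

variable {S : Type*} [MeasurableSpace S]

/-- Irreducibility: from every state one can reach every other state. -/
def Irreducible (C : Chain S) : Prop :=
  ∀ x y : S, ∃ n : ℕ, 0 < C.μ x {f | f n = y}

/-- Positive recurrence: the return time to each state is almost surely finite and
has finite expectation. -/
def PositiveRecurrent (C : Chain S) : Prop :=
  ∀ x : S, C.μ x {f | hit x f = ⊤} = 0 ∧
    Integrable (fun f => ((hit x f).toNat : ℝ)) (C.μ x)

/-- Aperiodicity: for each state, the only common divisor of the possible return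
times is `1`. -/
def Aperiodic (C : Chain S) : Prop :=
  ∀ x : S, ∀ d : ℕ, (∀ n : ℕ, 1 ≤ n → 0 < C.μ x {f | f n = x} → d ∣ n) → d ∣ 1

/-- `E_x[T_i]`, the expected hitting time of `i` starting from `x`. -/
def ERet (C : Chain S) (x i : S) : ℝ :=
  ∫ f, ((hit i f).toNat : ℝ) ∂ C.μ x

/-- The stationary probability `π_i = 1 / E_i[T_i]`. -/
def statPi (C : Chain S) (i : S) : ℝ := (C.ERet i i)⁻¹

/-- The truncated mean `E_i[min(T_i, θ)]`. -/
def EThat (C : Chain S) (i : S) (θ : ℕ) : ℝ :=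
  ∫ f, (truncHit i θ f : ℝ) ∂ C.μ i

/-- `E_i[F̂_j] = E_i[Σ_{s=1}^{min(T_i,θ)} 1{X_s = j}]`. -/
def EVisits (C : Chain S) (i j : S) (θ : ℕ) : ℝ :=
  ∫ f, (visits i j θ f : ℝ) ∂ C.μ i

/-- `P_i(T_i > k)`, as a real number. -/
def tailP (C : Chain S) (i : S) (k : ℕ) : ℝ :=
  (C.μ i {f | (k : ℕ∞) < hit i f}).toReal

/-- The maximal hitting time `H_i = max_x E_x[T_i]`. -/
def maxHit (C : Chain S) (i : S) : ℝ := ⨆ x : S, C.ERet x i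

/-- Entry `Z_{jk} = Σ_{t=0}^∞ (P^{(t)}_{jk} − π_k)` of the fundamental matrix. -/
def Zfun (C : Chain S) (j k : S) : ℝ :=
  ∑' t : ℕ, ((C.μ j {f | f t = k}).toReal - C.statPi k)

/-- `Z_max(i) = max_k |Z_{ki}|`. -/
def Zmax (C : Chain S) (i : S) : ℝ := ⨆ k : S, |C.Zfun k i|

end Chain


/-- The randomness of the local algorithm with anchor node `i` and parameters `ε`, `α`,
run on the chain `C`: a probability space carrying, for every iteration `t` and sample
index `k`, an independent sample trajectory `path t k` of the chain started at `i`,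
together with the sample numbers `N^{(t)}`, empirical truncated return times `T̂^{(t)}`
and truncated fractions `p̂^{(t)}`, with `θ^{(t)} = 2^t`. -/
structure Algo {S : Type*} [MeasurableSpace S] (C : Chain S) (i : S) (ε α : ℝ)
    (Ω : Type*) [MeasurableSpace Ω] where
  vol : Measure Ω
  isProb : IsProbabilityMeasure vol
  path : ℕ → ℕ → Ω → (ℕ → S)
  meas_path : ∀ t k, Measurable (path t k)
  law_path : ∀ t k, vol.map (path t k) = C.μ i
  indep_path : iIndepFun (fun p : ℕ × ℕ => path p.1 p.2) vol
  Nsamp : ℕ → Ω → ℕ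
  That : ℕ → Ω → ℝ
  phat : ℕ → Ω → ℝ
  hThat : ∀ t ω, That t ω =
    (Nsamp t ω : ℝ)⁻¹ * ∑ k ∈ Finset.range (Nsamp t ω), (truncHit i (2 ^ t) (path t k ω) : ℝ)
  hphat : ∀ t ω, phat t ω = (Nsamp t ω : ℝ)⁻¹ *
    ∑ k ∈ Finset.range (Nsamp t ω),
      (if ((2 ^ t : ℕ) : ℕ∞) < hit i (path t k ω) then (1 : ℝ) else 0)
  hN1 : ∀ ω, Nsamp 1 ω = ⌈6 * (1 + ε) * Real.log (8 / α) / ε ^ 2⌉₊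
  hNsucc : ∀ t ω, 1 ≤ t → Nsamp (t + 1) ω =
    ⌈3 * (1 + ε) * (2 ^ (t + 1) : ℝ) * Real.log (4 * (2 ^ (t + 1) : ℝ) / α) /
      (That t ω * ε ^ 2)⌉₊

namespace Algo

variable {S : Type*} [MeasurableSpace S] {C : Chain S} {i : S} {ε α : ℝ}
  {Ω : Type*} [MeasurableSpace Ω]

/-- The estimate `F̂_j^{(t)}` of the visit frequency to an observer node `j`. -/
def Fhat (A : Algo C i ε α Ω) (j : S) (t : ℕ) (ω : Ω) : ℝ :=
  (A.Nsamp t ω : ℝ)⁻¹ *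
    ∑ k ∈ Finset.range (A.Nsamp t ω), (visits i j (2 ^ t) (A.path t k ω) : ℝ)

/-- Termination condition at iteration `t`: (a) `π̂^{(t)} < Δ/(1+ε)`, or
(b) `p̂^{(t)} π̂^{(t)} < εΔ`, where `π̂^{(t)} = 1/T̂^{(t)}`. -/
def stops (A : Algo C i ε α Ω) (Δ : ℝ) (t : ℕ) (ω : Ω) : Prop :=
  (A.That t ω)⁻¹ < Δ / (1 + ε) ∨ A.phat t ω * (A.That t ω)⁻¹ < ε * Δ

/-- The terminal iteration `t_max` of the algorithm. -/
def tmax (A : Algo C i ε α Ω) (Δ : ℝ) (ω : Ω) : ℕ :=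
  sInf {t : ℕ | 1 ≤ t ∧ A.stops Δ t ω}

end Algo

/-!
Each estimate of iteration `k + 1` is the mean of `N^{(k+1)}` i.i.d. samples with values in
`[0, θ]` and mean `m`, so by the multiplicative Chernoff bound it misses `(1 ± ε) m` with
probability at most `2 exp (-N m ε² / (3θ))`. The sample size `N^{(k+1)}` depends only on the
iterations `≤ k`, hence is independent of the samples it counts, and while `T̂^{(1)}, …, T̂^{(k)}`
are accurate it is at least `3 θ^{(k+1)} L / (E_k ε²)`, where `L = log (4 θ^{(k+1)} / α)` and
`E_k = E_i[min(T_i, θ^{(k)})]`. This makes both failure probabilities of iteration `k + 1` at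
most `α / 2^(k+2)`: for `T̂` since `E_k ≤ E_{k+1}`, for `1 - p̂` (with `θ = 1`) since
`E_k ≤ θ^{(k+1)} / 2` and `1 - P_i(T_i > θ^{(k+1)}) > 1/2`. Splitting a failure according to the
first iteration at which it happens and summing the geometric series bounds the failure
probability by `α`, for every `t` at once.
-/

open Real

section ReturnTime

variable {S : Type*} (i : S) (f : ℕ → S)

lemma lt_hit_iff (θ : ℕ) : (θ : ℕ∞) < hit i f ↔ ∀ m, 1 ≤ m → m ≤ θ → f m ≠ i := by
  unfold hit
  constructor
  · rintro h m hm hmθ hfm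
    have := h.trans_le (sInf_le ⟨m, rfl, hm, hfm⟩)
    exact absurd hmθ (by exact_mod_cast this.not_ge)
  · intro h
    by_contra! hle
    have hne : {n : ℕ∞ | ∃ m : ℕ, n = m ∧ 1 ≤ m ∧ f m = i}.Nonempty := by
      by_contra hempty
      simp [Set.not_nonempty_iff_eq_empty.mp hempty] at hle
    obtain ⟨m, hm, hm1, hfm⟩ := csInf_mem hne
    rw [hm] at hle
    exact h m hm1 (by exact_mod_cast hle) hfm

lemma one_le_hit : 1 ≤ hit i f :=
  le_sInf fun _ ⟨_, hn, hm, _⟩ => hn ▸ by exact_mod_cast hm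

lemma ENat.toNat_min_coe_eq_card (x : ℕ∞) (θ : ℕ) :
    (min x θ).toNat = #{s ∈ range θ | ((s : ℕ) : ℕ∞) < x} := by
  induction x using ENat.recTopCoe with
  | top => simp
  | coe m =>
    have : {s ∈ range θ | ((s : ℕ) : ℕ∞) < m} = range (min m θ) := by
      ext s; simp only [mem_filter, Finset.mem_range, Nat.cast_lt]; omega
    rw [this, card_range, ← (Nat.mono_cast (α := ℕ∞)).map_min, ENat.toNat_natCast]

lemma truncHit_eq_card (θ : ℕ) : truncHit i θ f = #{s ∈ range θ | ((s : ℕ) : ℕ∞) < hit i f} :=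
  ENat.toNat_min_coe_eq_card _ θ

lemma truncHit_le (θ : ℕ) : truncHit i θ f ≤ θ := by
  rw [truncHit_eq_card]
  exact (card_filter_le _ _).trans (card_range θ).le

lemma truncHit_one : truncHit i 1 f = 1 := by
  rw [truncHit, Nat.cast_one, min_eq_right (one_le_hit i f)]
  rfl

lemma truncHit_mono {θ₁ θ₂ : ℕ} (h : θ₁ ≤ θ₂) : truncHit i θ₁ f ≤ truncHit i θ₂ f := by
  simp only [truncHit_eq_card]
  exact card_le_card (filter_subset_filter _ (range_subset_range.mpr h))

def returnedBy (θ : ℕ) (f : ℕ → S) : ℝ :=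
  if (θ : ℕ∞) < hit i f then 0 else 1

lemma returnedBy_eq_indicator (θ : ℕ) :
    returnedBy i θ = {f : ℕ → S | (θ : ℕ∞) < hit i f}ᶜ.indicator 1 := by
  ext f
  by_cases h : (θ : ℕ∞) < hit i f <;> simp [returnedBy, h]

variable [MeasurableSpace S] [MeasurableSingletonClass S]

lemma measurableSet_lt_hit (θ : ℕ) : MeasurableSet {f : ℕ → S | (θ : ℕ∞) < hit i f} := by
  have : {f : ℕ → S | (θ : ℕ∞) < hit i f} = ⋂ m ∈ Finset.Icc 1 θ, {f | f m ≠ i} := by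
    ext f
    simp [lt_hit_iff]
  rw [this]
  exact Finset.measurableSet_biInter _ fun m _ =>
    (measurableSet_singleton i).preimage (measurable_pi_apply m) |>.compl

lemma measurable_truncHit (θ : ℕ) : Measurable fun f : ℕ → S => (truncHit i θ f : ℝ) := by
  simp only [truncHit_eq_card, natCast_card_filter]
  exact Finset.measurable_sum _ fun s _ =>
    Measurable.ite (measurableSet_lt_hit i s) measurable_const measurable_const

lemma measurable_returnedBy (θ : ℕ) : Measurable (returnedBy i θ) := by
  rw [returnedBy_eq_indicator]
  exact measurable_const.indicator (measurableSet_lt_hit i θ).compl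

end ReturnTime

namespace Chain

variable {S : Type*} [MeasurableSpace S] (C : Chain S) (i : S)

lemma EThat_one : C.EThat i 1 = 1 := by
  have := C.isProb i
  simp [EThat, truncHit_one]

lemma tailP_antitone : Antitone (C.tailP i) := fun _ _ h =>
  have := C.isProb i
  ENNReal.toReal_mono (measure_ne_top _ _)
    (measure_mono fun _ (hf : (_ : ℕ∞) < _) => (Nat.cast_le.mpr h).trans_lt hf)

variable [MeasurableSingletonClass S]

lemma integral_returnedBy (θ : ℕ) : ∫ f, returnedBy i θ f ∂C.μ i = 1 - C.tailP i θ := by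
  have := C.isProb i
  rw [returnedBy_eq_indicator, integral_indicator_one (measurableSet_lt_hit i θ).compl,
    probReal_compl_eq_one_sub (measurableSet_lt_hit i θ)]
  rfl

lemma integrable_truncHit (θ : ℕ) : Integrable (fun f => (truncHit i θ f : ℝ)) (C.μ i) :=
  have := C.isProb i
  .of_mem_Icc 0 θ (measurable_truncHit i θ).aemeasurable
    (ae_of_all _ fun f => ⟨Nat.cast_nonneg _, Nat.cast_le.mpr (truncHit_le i f θ)⟩)

lemma EThat_mono {θ₁ θ₂ : ℕ} (h : θ₁ ≤ θ₂) : C.EThat i θ₁ ≤ C.EThat i θ₂ :=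
  integral_mono (C.integrable_truncHit i θ₁) (C.integrable_truncHit i θ₂)
    fun f => Nat.cast_le.mpr (truncHit_mono i f h)

lemma one_le_EThat {θ : ℕ} (hθ : 1 ≤ θ) : 1 ≤ C.EThat i θ :=
  C.EThat_one i ▸ C.EThat_mono i hθ

lemma EThat_le (θ : ℕ) : C.EThat i θ ≤ θ := by
  have := C.isProb i
  calc C.EThat i θ ≤ ∫ _, (θ : ℝ) ∂C.μ i :=
        integral_mono (C.integrable_truncHit i θ) (integrable_const _)
          fun f => Nat.cast_le.mpr (truncHit_le i f θ)
    _ = θ := by simp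

end Chain

lemma exp_two_thirds_mul_le {ε : ℝ} (hε₀ : 0 ≤ ε) (hε₁ : ε ≤ 1) :
    exp (2 / 3 * ε) ≤ 1 + (1 + ε) * (2 / 3 * ε) - ε ^ 2 / 3 := by
  have h := exp_bound' (x := 2 / 3 * ε) (by positivity) (by linarith) (n := 3) (by norm_num)
  norm_num [Finset.sum_range_succ, Nat.factorial] at h
  nlinarith [pow_le_one₀ hε₀ hε₁ (n := 3)]

lemma exp_neg_le_one_sub_add_sq_div_two {x : ℝ} (hx : 0 ≤ x) : exp (-x) ≤ 1 - x + x ^ 2 / 2 := by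
  rw [exp_neg, inv_le_iff_one_le_mul₀ (exp_pos x)]
  calc (1 : ℝ) ≤ (1 - x + x ^ 2 / 2) * (1 + x + x ^ 2 / 2) := by nlinarith [pow_nonneg hx 4]
    _ ≤ (1 - x + x ^ 2 / 2) * exp x := by
        gcongr
        · nlinarith
        · exact quadratic_le_exp_of_nonneg hx

section Chernoff

variable {Ω : Type*} {mΩ : MeasurableSpace Ω} {μ : Measure Ω} [IsProbabilityMeasure μ]

lemma mgf_le_exp_of_mem_Icc {Y : Ω → ℝ} (hY : Measurable Y) {θ : ℝ} (hθ : 0 < θ)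
    (hYθ : ∀ ω, Y ω ∈ Icc 0 θ) (t : ℝ) :
    mgf Y μ t ≤ exp (μ[Y] / θ * (exp (t * θ) - 1)) := by
  -- `exp (t ·)` lies below its chord over `[0, θ]`.
  have hchord : ∀ ω, exp (t * Y ω) ≤ 1 + Y ω / θ * (exp (t * θ) - 1) := by
    intro ω
    obtain ⟨h₀, h₁⟩ := hYθ ω
    have hs₁ : Y ω / θ ≤ 1 := (div_le_one hθ).mpr h₁
    have := convexOn_exp.2 (mem_univ 0) (mem_univ (t * θ)) (sub_nonneg.mpr hs₁)
      (by positivity : 0 ≤ Y ω / θ) (sub_add_cancel 1 _)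
    simp only [smul_eq_mul, mul_zero, zero_add, exp_zero, mul_one] at this
    rw [show Y ω / θ * (t * θ) = t * Y ω by field_simp] at this
    linarith
  have hYint : Integrable Y μ := .of_mem_Icc 0 θ hY.aemeasurable (ae_of_all _ hYθ)
  have hchord_int : Integrable (fun ω => 1 + Y ω / θ * (exp (t * θ) - 1)) μ :=
    (integrable_const 1).add ((hYint.div_const θ).mul_const _)
  calc mgf Y μ t ≤ ∫ ω, (1 + Y ω / θ * (exp (t * θ) - 1)) ∂μ :=
        integral_mono (integrable_exp_mul_of_mem_Icc hY.aemeasurable (ae_of_all _ hYθ))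
          hchord_int hchord
    _ = 1 + μ[Y] / θ * (exp (t * θ) - 1) := by
        rw [integral_add (integrable_const 1) ((hYint.div_const θ).mul_const _),
          integral_mul_const, integral_div]
        simp
    _ ≤ exp (μ[Y] / θ * (exp (t * θ) - 1)) := by
        linarith [add_one_le_exp (μ[Y] / θ * (exp (t * θ) - 1))]

lemma one_sub_le_toReal_of_measure_compl_le {s : Set Ω} {a : ℝ} (ha : 0 ≤ a)
    (h : μ sᶜ ≤ ENNReal.ofReal a) : 1 - a ≤ (μ s).toReal := by
  have h₁ := ENNReal.toReal_mono (by finiteness)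
    ((measure_univ.symm.trans_le (measure_univ_le_add_compl s)).trans (add_le_add le_rfl h))
  rw [ENNReal.toReal_add (measure_ne_top _ _) ENNReal.ofReal_ne_top, ENNReal.toReal_ofReal ha,
    ENNReal.toReal_one] at h₁
  linarith

variable {X : ℕ → Ω → ℝ} {θ m ε : ℝ}

lemma integrable_exp_mul_sum_range (hX : ∀ j, Measurable (X j)) (hXθ : ∀ j ω, X j ω ∈ Icc 0 θ)
    (n : ℕ) (t : ℝ) : Integrable (fun ω => exp (t * ∑ j ∈ range n, X j ω)) μ :=
  integrable_exp_mul_of_mem_Icc (Finset.measurable_sum _ fun j _ => hX j).aemeasurable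
    (ae_of_all _ fun ω => ⟨sum_nonneg fun j _ => (hXθ j ω).1,
      (sum_le_sum fun j _ => (hXθ j ω).2).trans_eq (by simp : ∑ _ ∈ range n, θ = n * θ)⟩)

lemma mgf_sum_range_le (hind : iIndepFun X μ) (hX : ∀ j, Measurable (X j)) (hθ : 0 < θ)
    (hXθ : ∀ j ω, X j ω ∈ Icc 0 θ) (hm : ∀ j, μ[X j] = m) (n : ℕ) (t : ℝ) :
    mgf (fun ω => ∑ j ∈ range n, X j ω) μ t ≤ exp (n * m / θ * (exp (t * θ) - 1)) := by
  rw [show (fun ω => ∑ j ∈ range n, X j ω) = ∑ j ∈ range n, X j by ext; simp,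
    hind.mgf_sum hX]
  calc ∏ j ∈ range n, mgf (X j) μ t ≤ ∏ _j ∈ range n, exp (m / θ * (exp (t * θ) - 1)) :=
        prod_le_prod (fun _ _ => mgf_nonneg)
          fun j _ => hm j ▸ mgf_le_exp_of_mem_Icc (hX j) hθ (hXθ j) t
    _ = exp (n * m / θ * (exp (t * θ) - 1)) := by
        rw [prod_const, card_range, ← exp_nat_mul]
        ring_nf

lemma measureReal_sum_range_ge_le (hind : iIndepFun X μ) (hX : ∀ j, Measurable (X j))
    (hθ : 0 < θ) (hXθ : ∀ j ω, X j ω ∈ Icc 0 θ) (hm : ∀ j, μ[X j] = m) (hε₀ : 0 ≤ ε)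
    (hε₁ : ε ≤ 1) (n : ℕ) :
    μ.real {ω | (1 + ε) * (n * m) ≤ ∑ j ∈ range n, X j ω} ≤
      exp (-(n * m * ε ^ 2 / (3 * θ))) := by
  have hm₀ : 0 ≤ m := hm 0 ▸ integral_nonneg fun ω => (hXθ 0 ω).1
  set t := 2 / 3 * ε / θ with ht
  refine (measure_ge_le_exp_mul_mgf _ (by positivity)
    (integrable_exp_mul_sum_range hX hXθ n t)).trans ?_
  calc exp (-t * ((1 + ε) * (n * m))) * mgf (fun ω => ∑ j ∈ range n, X j ω) μ t
      ≤ exp (-t * ((1 + ε) * (n * m))) * exp (n * m / θ * (exp (t * θ) - 1)) := by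
        gcongr
        exact mgf_sum_range_le hind hX hθ hXθ hm n t
    _ = exp (n * m / θ * (exp (2 / 3 * ε) - 1 - (1 + ε) * (2 / 3 * ε))) := by
        rw [← exp_add, show t * θ = 2 / 3 * ε by rw [ht]; field_simp]
        congr 1
        rw [ht]
        field_simp
        ring
    _ ≤ exp (-(n * m * ε ^ 2 / (3 * θ))) := by
        gcongr exp ?_
        calc n * m / θ * (exp (2 / 3 * ε) - 1 - (1 + ε) * (2 / 3 * ε))
            ≤ n * m / θ * (-(ε ^ 2 / 3)) := by
              gcongr
              linarith [exp_two_thirds_mul_le hε₀ hε₁]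
          _ = -(n * m * ε ^ 2 / (3 * θ)) := by ring

lemma measureReal_sum_range_le_le (hind : iIndepFun X μ) (hX : ∀ j, Measurable (X j))
    (hθ : 0 < θ) (hXθ : ∀ j ω, X j ω ∈ Icc 0 θ) (hm : ∀ j, μ[X j] = m) (hε₀ : 0 ≤ ε)
    (n : ℕ) :
    μ.real {ω | ∑ j ∈ range n, X j ω ≤ (1 - ε) * (n * m)} ≤
      exp (-(n * m * ε ^ 2 / (3 * θ))) := by
  have hm₀ : 0 ≤ m := hm 0 ▸ integral_nonneg fun ω => (hXθ 0 ω).1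
  set t := -(ε / θ) with ht
  refine (measure_le_le_exp_mul_mgf _ (by simp only [t, neg_nonpos]; positivity)
    (integrable_exp_mul_sum_range hX hXθ n t)).trans ?_
  calc exp (-t * ((1 - ε) * (n * m))) * mgf (fun ω => ∑ j ∈ range n, X j ω) μ t
      ≤ exp (-t * ((1 - ε) * (n * m))) * exp (n * m / θ * (exp (t * θ) - 1)) := by
        gcongr
        exact mgf_sum_range_le hind hX hθ hXθ hm n t
    _ = exp (n * m / θ * (exp (-ε) - 1 + (1 - ε) * ε)) := by
        rw [← exp_add, show t * θ = -ε by rw [ht]; field_simp]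
        congr 1
        rw [ht]
        field_simp
        ring
    _ ≤ exp (-(n * m * ε ^ 2 / (3 * θ))) := by
        gcongr exp ?_
        calc n * m / θ * (exp (-ε) - 1 + (1 - ε) * ε)
            ≤ n * m / θ * (-(ε ^ 2 / 3)) := by
              gcongr
              nlinarith [exp_neg_le_one_sub_add_sq_div_two hε₀]
          _ = -(n * m * ε ^ 2 / (3 * θ)) := by ring

lemma measure_mean_not_mem_Icc_le (hind : iIndepFun X μ) (hX : ∀ j, Measurable (X j))
    (hθ : 0 < θ) (hXθ : ∀ j ω, X j ω ∈ Icc 0 θ) (hm : ∀ j, μ[X j] = m) (hε : ε ∈ Set.Ioo 0 1)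
    (n : ℕ) :
    μ {ω | (n : ℝ)⁻¹ * ∑ j ∈ range n, X j ω ∉ Icc ((1 - ε) * m) ((1 + ε) * m)} ≤
      ENNReal.ofReal (2 * exp (-(n * m * ε ^ 2 / (3 * θ)))) := by
  rcases n.eq_zero_or_pos with rfl | hn
  · simpa using prob_le_one.trans (by norm_num : (1 : ℝ≥0∞) ≤ 2)
  have hn' : (0 : ℝ) < n := Nat.cast_pos.mpr hn
  have hsub : {ω | (n : ℝ)⁻¹ * ∑ j ∈ range n, X j ω ∉ Icc ((1 - ε) * m) ((1 + ε) * m)} ⊆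
      {ω | (1 + ε) * (n * m) ≤ ∑ j ∈ range n, X j ω} ∪
        {ω | ∑ j ∈ range n, X j ω ≤ (1 - ε) * (n * m)} := by
    intro ω hω
    by_contra! h
    simp only [Set.mem_union, Set.mem_ofPred_eq, not_or, not_le] at h
    refine hω ⟨?_, ?_⟩
    · rw [le_inv_mul_iff₀ hn']; linarith
    · rw [inv_mul_le_iff₀ hn']; linarith
  set e := exp (-(n * m * ε ^ 2 / (3 * θ)))
  calc μ _ ≤ μ {ω | (1 + ε) * (n * m) ≤ ∑ j ∈ range n, X j ω} +
        μ {ω | ∑ j ∈ range n, X j ω ≤ (1 - ε) * (n * m)} :=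
        (measure_mono hsub).trans (measure_union_le _ _)
    _ ≤ ENNReal.ofReal e + ENNReal.ofReal e := by
        rw [← ofReal_measureReal, ← ofReal_measureReal]
        gcongr
        · exact measureReal_sum_range_ge_le hind hX hθ hXθ hm hε.1.le hε.2.le n
        · exact measureReal_sum_range_le_le hind hX hθ hXθ hm hε.1.le n
    _ = ENNReal.ofReal (2 * e) := by
        rw [← ENNReal.ofReal_add (by positivity) (by positivity), two_mul]

lemma measure_mean_adaptive_not_mem_Icc_le {m₀ m₁ : MeasurableSpace Ω} (hm₀ : m₀ ≤ mΩ)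
    (hindep : Indep m₁ m₀ μ) (hind : iIndepFun X μ) (hX : ∀ j, Measurable[m₁] (X j))
    (hm₁ : m₁ ≤ mΩ) (hθ : 0 < θ) (hXθ : ∀ j ω, X j ω ∈ Icc 0 θ) (hm : ∀ j, μ[X j] = m)
    (hε : ε ∈ Set.Ioo 0 1) {N : Ω → ℕ} (hN : Measurable[m₀] N) {G : Set Ω}
    (hG : MeasurableSet[m₀] G) {L : ℝ} (hL : ∀ ω ∈ G, L ≤ N ω * m * ε ^ 2 / (3 * θ)) :
    μ ({ω | (N ω : ℝ)⁻¹ * ∑ j ∈ range (N ω), X j ω ∉ Icc ((1 - ε) * m) ((1 + ε) * m)} ∩ G) ≤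
      ENNReal.ofReal (2 * exp (-L)) := by
  -- Condition on `N = n`: that event lies in `m₀`, while the `n`-sample mean is `m₁`-measurable.
  set F : ℕ → Set Ω := fun n =>
    {ω | (n : ℝ)⁻¹ * ∑ j ∈ range n, X j ω ∉ Icc ((1 - ε) * m) ((1 + ε) * m)}
  set B : ℕ → Set Ω := fun n => N ⁻¹' {n} ∩ G
  have hB : ∀ n, MeasurableSet[m₀] (B n) := fun n => (hN (measurableSet_singleton n)).inter hG
  have hF : ∀ n, MeasurableSet[m₁] (F n) := fun n =>
    (measurableSet_Icc.preimage
      ((Finset.measurable_sum _ fun j _ => hX j).const_mul _)).compl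
  have hterm : ∀ n, μ (F n ∩ B n) ≤ ENNReal.ofReal (2 * exp (-L)) * μ (B n) := by
    intro n
    rcases (B n).eq_empty_or_nonempty with h | ⟨ω, hωn, hωG⟩
    · simp [h]
    rw [(Indep_iff _ _ _).mp hindep _ _ (hF n) (hB n)]
    gcongr
    refine (measure_mean_not_mem_Icc_le hind (fun j => (hX j).mono hm₁ le_rfl) hθ hXθ hm hε
      n).trans (ENNReal.ofReal_le_ofReal ?_)
    have := hL ω hωG
    rw [show N ω = n from hωn] at this
    gcongr
  have hdisj : Pairwise (Function.onFun Disjoint B) := fun a b hab =>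
    Set.disjoint_left.mpr fun ω ⟨ha, _⟩ ⟨hb, _⟩ => hab ((show N ω = a from ha).symm.trans hb)
  calc μ (_ ∩ G) ≤ μ (⋃ n, F n ∩ B n) :=
        measure_mono fun ω ⟨hωF, hωG⟩ => mem_iUnion.mpr ⟨N ω, hωF, rfl, hωG⟩
    _ ≤ ∑' n, μ (F n ∩ B n) := measure_iUnion_le _
    _ ≤ ∑' n, ENNReal.ofReal (2 * exp (-L)) * μ (B n) := ENNReal.tsum_le_tsum hterm
    _ = ENNReal.ofReal (2 * exp (-L)) * μ (⋃ n, B n) := by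
        rw [ENNReal.tsum_mul_left, measure_iUnion hdisj fun n => hm₀ _ (hB n)]
    _ ≤ ENNReal.ofReal (2 * exp (-L)) := mul_le_of_le_one_right' prob_le_one

end Chernoff

lemma measurable_comp_nat {Ω γ : Type*} {m : MeasurableSpace Ω} [MeasurableSpace γ]
    {F : ℕ → Ω → γ} (hF : ∀ n, Measurable (F n)) {N : Ω → ℕ} (hN : Measurable N) :
    Measurable fun ω => F (N ω) ω :=
  (measurable_from_prod_countable_right (f := fun p : ℕ × Ω => F p.1 p.2) hF).comp
    (hN.prodMk measurable_id)

lemma two_mul_exp_neg_log_eq {α : ℝ} (hα : 0 < α) (k : ℕ) :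
    2 * exp (-log (4 * 2 ^ (k + 1) / α)) = α / 4 / 2 ^ k := by
  rw [exp_neg, exp_log (by positivity), inv_div, pow_succ]
  field_simp

lemma log_four_mul_two_pow_div_pos {α : ℝ} (hα : α ∈ Set.Ioo 0 1) (k : ℕ) :
    0 < log (4 * 2 ^ (k + 1) / α) :=
  log_pos ((one_lt_div hα.1).mpr
    (by linarith [hα.2, one_le_pow₀ (M₀ := ℝ) (a := 2) (n := k + 1) (by norm_num)]))

namespace Algo

variable {S : Type*} [MeasurableSpace S] {C : Chain S} {i : S}
  {ε α : ℝ} {Ω : Type*} [mΩ : MeasurableSpace Ω] (A : Algo C i ε α Ω)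

@[reducible] def pathσ (T : Set (ℕ × ℕ)) : MeasurableSpace Ω :=
  ⨆ p ∈ T, MeasurableSpace.comap (A.path p.1 p.2) inferInstance

lemma pathσ_le (T : Set (ℕ × ℕ)) : A.pathσ T ≤ mΩ :=
  iSup₂_le fun p _ => measurable_iff_comap_le.mp (A.meas_path p.1 p.2)

lemma pathσ_mono {T₁ T₂ : Set (ℕ × ℕ)} (h : T₁ ⊆ T₂) : A.pathσ T₁ ≤ A.pathσ T₂ :=
  biSup_mono h

lemma measurable_path_pathσ {T : Set (ℕ × ℕ)} {p : ℕ × ℕ} (hp : p ∈ T) :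
    Measurable[A.pathσ T] (A.path p.1 p.2) :=
  measurable_iff_comap_le.mpr
    (le_iSup₂ (f := fun q (_ : q ∈ T) => MeasurableSpace.comap (A.path q.1 q.2) inferInstance)
      p hp)

lemma indep_pathσ {T₁ T₂ : Set (ℕ × ℕ)} (h : Disjoint T₁ T₂) :
    Indep (A.pathσ T₁) (A.pathσ T₂) A.vol :=
  indep_iSup_of_disjoint
    (m := fun p : ℕ × ℕ => MeasurableSpace.comap (A.path p.1 p.2) inferInstance)
    (fun p => measurable_iff_comap_le.mp (A.meas_path p.1 p.2)) A.indep_path.iIndep h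

def sampleMean (g : (ℕ → S) → ℝ) (k : ℕ) (ω : Ω) : ℝ :=
  (A.Nsamp k ω : ℝ)⁻¹ * ∑ j ∈ range (A.Nsamp k ω), g (A.path k j ω)

lemma That_eq_sampleMean (k : ℕ) :
    A.That k = A.sampleMean (fun f => (truncHit i (2 ^ k) f : ℝ)) k :=
  funext (A.hThat k)

lemma one_sub_phat_eq_sampleMean {k : ℕ} {ω : Ω} (hN : A.Nsamp k ω ≠ 0) :
    1 - A.phat k ω = A.sampleMean (returnedBy i (2 ^ k)) k ω := by
  have hret : ∀ f, returnedBy i (2 ^ k) f =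
      1 - if (((2 ^ k : ℕ) : ℕ∞) < hit i f) then (1 : ℝ) else 0 := fun f => by
    unfold returnedBy
    split_ifs <;> norm_num
  simp only [A.hphat, sampleMean, hret, sum_sub_distrib, sum_const, card_range, nsmul_eq_mul,
    mul_one, mul_sub]
  rw [inv_mul_cancel₀ (Nat.cast_ne_zero.mpr hN)]

lemma measurable_sampleMean {T : Set (ℕ × ℕ)} {k : ℕ} (hT : ∀ j, (k, j) ∈ T)
    {g : (ℕ → S) → ℝ} (hg : Measurable g) (hN : Measurable[A.pathσ T] (A.Nsamp k)) :
    Measurable[A.pathσ T] (A.sampleMean g k) :=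
  measurable_comp_nat (F := fun n ω => (n : ℝ)⁻¹ * ∑ j ∈ range n, g (A.path k j ω))
    (fun _ => (Finset.measurable_sum _ fun j _ =>
      hg.comp (A.measurable_path_pathσ (hT j))).const_mul _) hN

def accurateT (k : ℕ) : Set Ω :=
  A.That k ⁻¹' Icc ((1 - ε) * C.EThat i (2 ^ k)) ((1 + ε) * C.EThat i (2 ^ k))

def accurateP (k : ℕ) : Set Ω :=
  (fun ω => 1 - A.phat k ω) ⁻¹'
    Icc ((1 - ε) * (1 - C.tailP i (2 ^ k))) ((1 + ε) * (1 - C.tailP i (2 ^ k)))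

-- For `k = 0` this is `univ`: the first sample size does not depend on any estimate.
def accurateTUpTo (k : ℕ) : Set Ω :=
  ⋂ k' ∈ Finset.Icc 1 k, A.accurateT k'

def failure (t₀ k : ℕ) : Set Ω :=
  (A.accurateT k)ᶜ ∪ {ω | t₀ ≤ k ∧ ω ∉ A.accurateP k}

lemma mem_iUnion_failure_inter_accurateTUpTo {t₀ : ℕ} {ω : Ω}
    (h : ∃ k, ω ∈ A.failure t₀ (k + 1)) :
    ω ∈ ⋃ k, A.failure t₀ (k + 1) ∩ A.accurateTUpTo k := by
  refine mem_iUnion.mpr ⟨Nat.find h, Nat.find_spec h, mem_iInter₂.mpr fun k' hk' => ?_⟩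
  obtain ⟨hk'₁, hk'₂⟩ := Finset.mem_Icc.mp hk'
  obtain ⟨j, rfl⟩ := Nat.exists_eq_add_of_le' hk'₁
  by_contra hj
  exact Nat.find_min h (by omega : j < Nat.find h) (Or.inl hj)

variable [MeasurableSingletonClass S]

lemma measurable_That_succ {k : ℕ} (hN : Measurable[A.pathσ {p | p.1 ≤ k}] (A.Nsamp (k + 1))) :
    Measurable[A.pathσ {p | p.1 ≤ k + 1}] (A.That (k + 1)) := by
  rw [A.That_eq_sampleMean]
  exact A.measurable_sampleMean (fun _ => show k + 1 ≤ k + 1 from le_rfl) (measurable_truncHit i _)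
    (hN.mono (A.pathσ_mono fun p (hp : p.1 ≤ k) => (by omega : p.1 ≤ k + 1)) le_rfl)

lemma measurable_Nsamp_succ (k : ℕ) : Measurable[A.pathσ {p | p.1 ≤ k}] (A.Nsamp (k + 1)) := by
  induction k with
  | zero =>
    rw [funext A.hN1]
    exact measurable_const
  | succ k ih =>
    have hN : A.Nsamp (k + 1 + 1) = fun ω => ⌈3 * (1 + ε) * (2 ^ (k + 1 + 1) : ℝ) *
        log (4 * (2 ^ (k + 1 + 1) : ℝ) / α) / (A.That (k + 1) ω * ε ^ 2)⌉₊ :=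
      funext fun ω => A.hNsucc (k + 1) ω (by omega)
    rw [hN]
    exact Nat.measurable_ceil.comp (measurable_const.div ((A.measurable_That_succ ih).mul_const _))

lemma measurable_That {k : ℕ} (hk : 1 ≤ k) : Measurable[A.pathσ {p | p.1 ≤ k}] (A.That k) := by
  obtain ⟨k, rfl⟩ := Nat.exists_eq_add_of_le' hk
  exact A.measurable_That_succ (A.measurable_Nsamp_succ k)

lemma measurableSet_accurateTUpTo (k : ℕ) :
    MeasurableSet[A.pathσ {p | p.1 ≤ k}] (A.accurateTUpTo k) :=
  Finset.measurableSet_biInter _ fun k' hk' =>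
    have hk' := Finset.mem_Icc.mp hk'
    measurableSet_Icc.preimage ((A.measurable_That hk'.1).mono
      (A.pathσ_mono fun p (hp : p.1 ≤ k') => (hp.trans hk'.2 : p.1 ≤ k)) le_rfl)

lemma Nsamp_succ_bound (hε : ε ∈ Set.Ioo 0 1) (hα : α ∈ Set.Ioo 0 1) (k : ℕ) {ω : Ω}
    (hω : ω ∈ A.accurateTUpTo k) :
    3 * 2 ^ (k + 1) * log (4 * 2 ^ (k + 1) / α) ≤
      A.Nsamp (k + 1) ω * C.EThat i (2 ^ k) * ε ^ 2 := by
  obtain ⟨hε₀, hε₁⟩ := hε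
  have hL := log_four_mul_two_pow_div_pos hα (k := k)
  rcases k with _ | k
  · -- `N^{(1)}` is fixed in advance, and `E_i[min(T_i, 1)] = 1`.
    have hceil := Nat.le_ceil (6 * (1 + ε) * log (8 / α) / ε ^ 2)
    rw [div_le_iff₀ (by positivity)] at hceil
    rw [A.hN1 ω, pow_zero, C.EThat_one]
    norm_num at hL ⊢
    nlinarith
  · have hT : ω ∈ A.accurateT (k + 1) :=
      mem_iInter₂.mp hω (k + 1) (Finset.mem_Icc.mpr ⟨by omega, le_rfl⟩)
    have hE : 1 ≤ C.EThat i (2 ^ (k + 1)) := C.one_le_EThat i Nat.one_le_two_pow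
    have hT₀ : 0 < A.That (k + 1) ω := lt_of_lt_of_le (by nlinarith) hT.1
    have hceil := Nat.le_ceil (3 * (1 + ε) * (2 ^ (k + 1 + 1) : ℝ) *
      log (4 * (2 ^ (k + 1 + 1) : ℝ) / α) / (A.That (k + 1) ω * ε ^ 2))
    rw [div_le_iff₀ (by positivity), ← A.hNsucc (k + 1) ω (by omega)] at hceil
    refine le_of_mul_le_mul_left ?_ (by linarith : (0 : ℝ) < 1 + ε)
    calc (1 + ε) * (3 * 2 ^ (k + 1 + 1) * log (4 * 2 ^ (k + 1 + 1) / α))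
        ≤ A.Nsamp (k + 1 + 1) ω * (A.That (k + 1) ω * ε ^ 2) := by linarith
      _ ≤ A.Nsamp (k + 1 + 1) ω * ((1 + ε) * C.EThat i (2 ^ (k + 1)) * ε ^ 2) := by
          gcongr
          exact hT.2
      _ = (1 + ε) * (A.Nsamp (k + 1 + 1) ω * C.EThat i (2 ^ (k + 1)) * ε ^ 2) := by ring

lemma Nsamp_succ_ne_zero (hε : ε ∈ Set.Ioo 0 1) (hα : α ∈ Set.Ioo 0 1) (k : ℕ) {ω : Ω}
    (hω : ω ∈ A.accurateTUpTo k) : A.Nsamp (k + 1) ω ≠ 0 := by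
  intro h
  have hN := A.Nsamp_succ_bound hε hα k hω
  rw [h, Nat.cast_zero, zero_mul, zero_mul] at hN
  have := log_four_mul_two_pow_div_pos hα k
  linarith [show 0 < 3 * (2 : ℝ) ^ (k + 1) * log (4 * 2 ^ (k + 1) / α) by positivity]

lemma measure_sampleMean_not_mem_Icc_le (hε : ε ∈ Set.Ioo 0 1) {g : (ℕ → S) → ℝ}
    (hg : Measurable g) {θ : ℝ} (hθ : 0 < θ) (hgθ : ∀ f, g f ∈ Icc 0 θ) (k : ℕ) {G : Set Ω}
    (hG : MeasurableSet[A.pathσ {p | p.1 ≤ k}] G) {L : ℝ}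
    (hL : ∀ ω ∈ G, L ≤ A.Nsamp (k + 1) ω * (∫ f, g f ∂C.μ i) * ε ^ 2 / (3 * θ)) :
    A.vol ({ω | A.sampleMean g (k + 1) ω ∉
        Icc ((1 - ε) * ∫ f, g f ∂C.μ i) ((1 + ε) * ∫ f, g f ∂C.μ i)} ∩ G) ≤
      ENNReal.ofReal (2 * exp (-L)) := by
  have := A.isProb
  have hdisj : Disjoint {p : ℕ × ℕ | p.1 = k + 1} {p | p.1 ≤ k} :=
    Set.disjoint_left.mpr fun p (h₁ : p.1 = k + 1) (h₂ : p.1 ≤ k) => by omega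
  exact measure_mean_adaptive_not_mem_Icc_le (X := fun j => g ∘ A.path (k + 1) j)
    (A.pathσ_le _) (A.indep_pathσ hdisj)
    ((A.indep_path.precomp (g := fun j => (k + 1, j)) fun _ _ h => (Prod.mk.inj h).2).comp
      (fun _ => g) fun _ => hg)
    (fun j => hg.comp (A.measurable_path_pathσ (p := (k + 1, j)) rfl)) (A.pathσ_le _) hθ
    (fun _ _ => hgθ _)
    (fun j => by
      rw [← A.law_path (k + 1) j, integral_map (A.meas_path _ _).aemeasurable
        hg.aestronglyMeasurable]
      rfl)
    hε (A.measurable_Nsamp_succ k) hG hL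

lemma measure_not_accurateT_succ_le (hε : ε ∈ Set.Ioo 0 1) (hα : α ∈ Set.Ioo 0 1) (k : ℕ) :
    A.vol ((A.accurateT (k + 1))ᶜ ∩ A.accurateTUpTo k) ≤ ENNReal.ofReal (α / 4 / 2 ^ k) := by
  have hset : (A.accurateT (k + 1))ᶜ = {ω | A.sampleMean (fun f => (truncHit i (2 ^ (k + 1)) f : ℝ))
      (k + 1) ω ∉ Icc ((1 - ε) * C.EThat i (2 ^ (k + 1))) ((1 + ε) * C.EThat i (2 ^ (k + 1)))} := by
    rw [accurateT, That_eq_sampleMean]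
    rfl
  rw [hset, ← two_mul_exp_neg_log_eq hα.1 k]
  refine A.measure_sampleMean_not_mem_Icc_le hε (measurable_truncHit i _) (θ := 2 ^ (k + 1))
    (by positivity) (fun f => ⟨Nat.cast_nonneg _, by exact_mod_cast truncHit_le i f _⟩) k
    (A.measurableSet_accurateTUpTo k) fun ω hω => ?_
  have hN := A.Nsamp_succ_bound hε hα k hω
  have hE : C.EThat i (2 ^ k) ≤ C.EThat i (2 ^ (k + 1)) :=
    C.EThat_mono i (Nat.pow_le_pow_right two_pos k.le_succ)
  change _ ≤ _ * C.EThat i (2 ^ (k + 1)) * _ / _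
  rw [le_div_iff₀ (by positivity)]
  calc log (4 * 2 ^ (k + 1) / α) * (3 * 2 ^ (k + 1))
      ≤ A.Nsamp (k + 1) ω * C.EThat i (2 ^ k) * ε ^ 2 := by linarith
    _ ≤ A.Nsamp (k + 1) ω * C.EThat i (2 ^ (k + 1)) * ε ^ 2 := by gcongr

lemma measure_not_accurateP_succ_le (hε : ε ∈ Set.Ioo 0 1) (hα : α ∈ Set.Ioo 0 1) {k : ℕ}
    (hq : C.tailP i (2 ^ (k + 1)) < 1 / 2) :
    A.vol ((A.accurateP (k + 1))ᶜ ∩ A.accurateTUpTo k) ≤ ENNReal.ofReal (α / 4 / 2 ^ k) := by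
  have hEk : C.EThat i (2 ^ k) ≤ 2 ^ k := by exact_mod_cast C.EThat_le i (2 ^ k)
  have hsub : (A.accurateP (k + 1))ᶜ ∩ A.accurateTUpTo k ⊆
      {ω | A.sampleMean (returnedBy i (2 ^ (k + 1))) (k + 1) ω ∉
        Icc ((1 - ε) * ∫ f, returnedBy i (2 ^ (k + 1)) f ∂C.μ i)
          ((1 + ε) * ∫ f, returnedBy i (2 ^ (k + 1)) f ∂C.μ i)} ∩ A.accurateTUpTo k := by
    rintro ω ⟨hωP, hω⟩
    refine ⟨?_, hω⟩
    rw [Set.mem_ofPred_eq, ← A.one_sub_phat_eq_sampleMean (A.Nsamp_succ_ne_zero hε hα k hω),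
      C.integral_returnedBy]
    exact hωP
  refine (measure_mono hsub).trans ?_
  rw [← two_mul_exp_neg_log_eq hα.1 k]
  refine A.measure_sampleMean_not_mem_Icc_le hε (measurable_returnedBy i _) (θ := 1) one_pos
    (fun f => by unfold returnedBy; split_ifs <;> simp) k
    (A.measurableSet_accurateTUpTo k) fun ω hω => ?_
  rw [C.integral_returnedBy, le_div_iff₀ (by norm_num)]
  set L := log (4 * 2 ^ (k + 1) / α)
  have h6 : 6 * L ≤ A.Nsamp (k + 1) ω * ε ^ 2 := by
    refine le_of_mul_le_mul_left ?_ (by positivity : (0 : ℝ) < 2 ^ k)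
    calc 2 ^ k * (6 * L) = 3 * 2 ^ (k + 1) * L := by ring
      _ ≤ A.Nsamp (k + 1) ω * C.EThat i (2 ^ k) * ε ^ 2 := A.Nsamp_succ_bound hε hα k hω
      _ ≤ A.Nsamp (k + 1) ω * 2 ^ k * ε ^ 2 := by gcongr
      _ = 2 ^ k * (A.Nsamp (k + 1) ω * ε ^ 2) := by ring
  calc L * (3 * 1) ≤ A.Nsamp (k + 1) ω * ε ^ 2 * (1 / 2) := by linarith
    _ ≤ A.Nsamp (k + 1) ω * ε ^ 2 * (1 - C.tailP i (2 ^ (k + 1))) := by gcongr; linarith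
    _ = A.Nsamp (k + 1) ω * (1 - C.tailP i (2 ^ (k + 1))) * ε ^ 2 := by ring

lemma measure_failure_succ_inter_le (hε : ε ∈ Set.Ioo 0 1) (hα : α ∈ Set.Ioo 0 1) {t₀ : ℕ}
    (hhalf : C.tailP i (2 ^ t₀) < 1 / 2) (k : ℕ) :
    A.vol (A.failure t₀ (k + 1) ∩ A.accurateTUpTo k) ≤ ENNReal.ofReal (α / 2 / 2 ^ k) := by
  have hP : A.vol ({ω | t₀ ≤ k + 1 ∧ ω ∉ A.accurateP (k + 1)} ∩ A.accurateTUpTo k) ≤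
      ENNReal.ofReal (α / 4 / 2 ^ k) := by
    by_cases ht₀ : t₀ ≤ k + 1
    · refine (measure_mono ?_).trans (A.measure_not_accurateP_succ_le hε hα
        ((C.tailP_antitone i (Nat.pow_le_pow_right two_pos ht₀)).trans_lt hhalf))
      exact fun ω ⟨⟨_, hω⟩, hG⟩ => ⟨hω, hG⟩
    · simp [ht₀]
  calc A.vol (A.failure t₀ (k + 1) ∩ A.accurateTUpTo k)
      ≤ A.vol ((A.accurateT (k + 1))ᶜ ∩ A.accurateTUpTo k) +
          A.vol ({ω | t₀ ≤ k + 1 ∧ ω ∉ A.accurateP (k + 1)} ∩ A.accurateTUpTo k) := by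
        rw [failure, Set.union_inter_distrib_right]
        exact measure_union_le _ _
    _ ≤ ENNReal.ofReal (α / 4 / 2 ^ k) + ENNReal.ofReal (α / 4 / 2 ^ k) :=
        add_le_add (A.measure_not_accurateT_succ_le hε hα k) hP
    _ = ENNReal.ofReal (α / 2 / 2 ^ k) := by
        rw [← ENNReal.ofReal_add (by positivity [hα.1]) (by positivity [hα.1])]
        ring_nf

lemma measure_iUnion_failure_le (hε : ε ∈ Set.Ioo 0 1) (hα : α ∈ Set.Ioo 0 1) {t₀ : ℕ}
    (hhalf : C.tailP i (2 ^ t₀) < 1 / 2) :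
    A.vol (⋃ k, A.failure t₀ (k + 1) ∩ A.accurateTUpTo k) ≤ ENNReal.ofReal α :=
  calc A.vol (⋃ k, A.failure t₀ (k + 1) ∩ A.accurateTUpTo k)
      ≤ ∑' k, ENNReal.ofReal (α / 2 / 2 ^ k) :=
        (measure_iUnion_le _).trans
          (ENNReal.tsum_le_tsum (A.measure_failure_succ_inter_le hε hα hhalf))
    _ = ENNReal.ofReal α := by
        rw [← ENNReal.ofReal_tsum_of_nonneg (fun k => by have := hα.1; positivity)
          (summable_geometric_two' α), tsum_geometric_two']

end Algo

theorem statement2_general {S : Type*} [MeasurableSpace S] [MeasurableSingletonClass S]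
    (C : Chain S) (i : S) (ε α : ℝ) (hε : ε ∈ Set.Ioo (0 : ℝ) 1) (hα : α ∈ Set.Ioo (0 : ℝ) 1)
    {Ω : Type*} [MeasurableSpace Ω] (A : Algo C i ε α Ω)
    (t₀ : ℕ) (ht₀ : 1 ≤ t₀) (hhalf : C.tailP i (2 ^ t₀) < 1 / 2)
    (t : ℕ) :
    1 - α ≤ (A.vol {ω |
      (∀ k, t₀ ≤ k → k ≤ t →
        1 - A.phat k ω ∈ Set.Icc ((1 - ε) * (1 - C.tailP i (2 ^ k)))
          ((1 + ε) * (1 - C.tailP i (2 ^ k)))) ∧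
      (∀ k, 1 ≤ k → k ≤ t →
        A.That k ω ∈ Set.Icc ((1 - ε) * C.EThat i (2 ^ k))
          ((1 + ε) * C.EThat i (2 ^ k)))}).toReal := by
  have := A.isProb
  refine one_sub_le_toReal_of_measure_compl_le hα.1.le
    ((measure_mono fun ω hω => A.mem_iUnion_failure_inter_accurateTUpTo ?_).trans
      (A.measure_iUnion_failure_le hε hα hhalf))
  simp only [mem_compl_iff, Set.mem_ofPred_eq, not_and_or, not_forall] at hω
  rcases hω with ⟨k, hk, -, hP⟩ | ⟨k, hk, -, hT⟩
  · obtain ⟨j, rfl⟩ := Nat.exists_eq_add_of_le' (ht₀.trans hk)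
    exact ⟨j, Or.inr ⟨hk, hP⟩⟩
  · obtain ⟨j, rfl⟩ := Nat.exists_eq_add_of_le' hk
    exact ⟨j, Or.inl hT⟩

/-- Lemma 5 of the paper. If `t₀` is such that
`P_i(T_i > θ^{(t₀)}) < 1/2`, then for every `t ≥ t₀`, with probability at least `1 − α`,
simultaneously `(1 − p̂^{(k)})` lies within a `(1 ± ε)` multiplicative interval around
`1 − P_i(T_i > θ^{(k)})` for all `k = t₀, …, t`, and `T̂_i^{(k)}` lies within a `(1 ± ε)`
multiplicative interval around `E_i[min(T_i, θ^{(k)})]` for all `k = 1, …, t`. -/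
theorem statement2 {S : Type*} [MeasurableSpace S] [MeasurableSingletonClass S] [Countable S]
    (C : Chain S) (hirr : C.Irreducible) (hrec : C.PositiveRecurrent)
    (i : S) (ε α : ℝ) (hε : ε ∈ Set.Ioo (0 : ℝ) 1) (hα : α ∈ Set.Ioo (0 : ℝ) 1)
    {Ω : Type*} [MeasurableSpace Ω] (A : Algo C i ε α Ω)
    (t₀ : ℕ) (ht₀ : 1 ≤ t₀) (hhalf : C.tailP i (2 ^ t₀) < 1 / 2)
    (t : ℕ) (ht : t₀ ≤ t) :
    1 - α ≤ (A.vol {ω |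
      (∀ k, t₀ ≤ k → k ≤ t →
        1 - A.phat k ω ∈ Set.Icc ((1 - ε) * (1 - C.tailP i (2 ^ k)))
          ((1 + ε) * (1 - C.tailP i (2 ^ k)))) ∧
      (∀ k, 1 ≤ k → k ≤ t →
        A.That k ω ∈ Set.Icc ((1 - ε) * C.EThat i (2 ^ k))
          ((1 + ε) * C.EThat i (2 ^ k)))}).toReal :=
  statement2_general C i ε α hε hα A t₀ ht₀ hhalf t

end

end LocalStationary
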